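/- arXiv:1807.03279 — 3 statements merged into one kernel-verified Lean document; each statement's English description precedes it below -/
import Mathlib

section
/- Suppose the modified Galerkin orthogonality holds: ∫₀ᵀ ⟨Ẋ(t), πz(t)⟩ dt = Σ_{ℓ=1}^L b_ℓ Q_ℓ. Then the residual pairing with respect to the unregularized operator decomposes exactly as ∫₀ᵀ ⟨Ẋ(t) − g₀(t), z(t)⟩ dt = E_R + E_E + E_Q + E_Re, where E_R = ∫₀ᵀ ⟨Ẋ(t) − Σ_{ℓ=1}^L b_ℓ G_ℓ(t), z(t) − πz(t)⟩ dt, E_E = ∫₀ᵀ ⟨Σ_{ℓ=1}^L b_ℓ G_ℓ(t) − f(t), z(t)⟩ dt, E_Q = Σ_{ℓ=1}^L b_ℓ ( Q_ℓ − ∫₀ᵀ ⟨G_ℓ(t), πz(t)⟩ dt ), and E_Re = ∫₀ᵀ ⟨f(t) − g₀(t), z(t)⟩ dt (the regularization error). -/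
open scoped RealInnerProductSpace

/-! Pointwise, `⟪Ẋ - g₀, z⟫` splits into the four error densities plus `⟪Ẋ, πz⟫ - ⟪S, πz⟫`, where
`S = ∑ b_ℓ G_ℓ` is the Runge–Kutta combination. After integration, Galerkin orthogonality replaces
`∫ ⟪Ẋ, πz⟫` by `∑ b_ℓ Q_ℓ`, and linearity turns `∫ ⟪S, πz⟫` into `∑ b_ℓ ∫ ⟪G_ℓ, πz⟫`, which together
give the quadrature error. -/

section

variable {E : Type*} [NormedAddCommGroup E] [InnerProductSpace ℝ E]

theorem inner_residual_split (x' g₀ f s z πz : E) :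
    ⟪x' - g₀, z⟫ =
      ⟪x' - s, z - πz⟫ + ⟪s - f, z⟫ + (⟪x', πz⟫ - ⟪s, πz⟫) + ⟪f - g₀, z⟫ := by
  simp only [inner_sub_left, inner_sub_right]
  ring

variable {μ : MeasureTheory.Measure ℝ} {a b : ℝ}

theorem intervalIntegral.integral_inner_sum_smul_left {ι : Type*} (S : Finset ι) (c : ι → ℝ)
    {G : ι → ℝ → E} {v : ℝ → E} (hG : ∀ i ∈ S, IntervalIntegrable (fun t => ⟪G i t, v t⟫) μ a b) :
    (∫ t in a..b, ⟪∑ i ∈ S, c i • G i t, v t⟫ ∂μ) = ∑ i ∈ S, c i * ∫ t in a..b, ⟪G i t, v t⟫ ∂μ := by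
  simp only [sum_inner, inner_smul_left, RCLike.conj_to_real]
  rw [integral_finsetSum fun i hi => (hG i hi).const_mul (c i)]
  simp only [integral_const_mul]

variable [MeasureTheory.IsLocallyFiniteMeasure μ]

theorem ContinuousOn.intervalIntegrable_inner {u v : ℝ → E}
    (hu : ContinuousOn u (Set.uIcc a b)) (hv : ContinuousOn v (Set.uIcc a b)) :
    IntervalIntegrable (fun t => ⟪u t, v t⟫) μ a b :=
  (hu.inner hv).intervalIntegrable

theorem intervalIntegral.integral_inner_residual_split
    {x' g₀ f s z πz : ℝ → E}
    (hx' : ContinuousOn x' (Set.uIcc a b)) (hg₀ : ContinuousOn g₀ (Set.uIcc a b))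
    (hf : ContinuousOn f (Set.uIcc a b)) (hs : ContinuousOn s (Set.uIcc a b))
    (hz : ContinuousOn z (Set.uIcc a b)) (hπz : ContinuousOn πz (Set.uIcc a b)) :
    (∫ t in a..b, ⟪x' t - g₀ t, z t⟫ ∂μ) =
      (∫ t in a..b, ⟪x' t - s t, z t - πz t⟫ ∂μ) + (∫ t in a..b, ⟪s t - f t, z t⟫ ∂μ)
        + ((∫ t in a..b, ⟪x' t, πz t⟫ ∂μ) - ∫ t in a..b, ⟪s t, πz t⟫ ∂μ)
        + ∫ t in a..b, ⟪f t - g₀ t, z t⟫ ∂μ := by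
  have hsplit := fun t => inner_residual_split (x' t) (g₀ t) (f t) (s t) (z t) (πz t)
  simp only [hsplit]
  have h₁ : IntervalIntegrable (fun t => ⟪x' t - s t, z t - πz t⟫) μ a b :=
    (hx'.sub hs).intervalIntegrable_inner (hz.sub hπz)
  have h₂ : IntervalIntegrable (fun t => ⟪s t - f t, z t⟫) μ a b :=
    (hs.sub hf).intervalIntegrable_inner hz
  have h₃ : IntervalIntegrable (fun t => ⟪x' t, πz t⟫) μ a b := hx'.intervalIntegrable_inner hπz
  have h₄ : IntervalIntegrable (fun t => ⟪s t, πz t⟫) μ a b := hs.intervalIntegrable_inner hπz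
  have h₅ : IntervalIntegrable (fun t => ⟪f t - g₀ t, z t⟫) μ a b :=
    (hf.sub hg₀).intervalIntegrable_inner hz
  rw [integral_add ((h₁.add h₂).add (h₃.sub h₄)) h₅, integral_add (h₁.add h₂) (h₃.sub h₄),
    integral_add h₁ h₂, integral_sub h₃ h₄]

end

theorem residual_error_decomposition_with_regularization_general
    (n L : ℕ) (T : ℝ) (hT : 0 < T)
    (X' f g₀ : ℝ → EuclideanSpace ℝ (Fin n))
    (G : Fin L → ℝ → EuclideanSpace ℝ (Fin n))
    (b : Fin L → ℝ)
    (z πz : ℝ → EuclideanSpace ℝ (Fin n))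
    (hX' : ContinuousOn X' (Set.Icc 0 T))
    (hf : ContinuousOn f (Set.Icc 0 T))
    (hg₀ : ContinuousOn g₀ (Set.Icc 0 T))
    (hG : ∀ ℓ, ContinuousOn (G ℓ) (Set.Icc 0 T))
    (hz : ContinuousOn z (Set.Icc 0 T))
    (hπz : ContinuousOn πz (Set.Icc 0 T))
    (Q : Fin L → ℝ)
    -- modified Galerkin orthogonality
    (hGal : (∫ t in (0 : ℝ)..T, ⟪X' t, πz t⟫) = ∑ ℓ, b ℓ * Q ℓ) :
    (∫ t in (0 : ℝ)..T, ⟪X' t - g₀ t, z t⟫) =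
      (∫ t in (0 : ℝ)..T, ⟪X' t - ∑ ℓ, b ℓ • G ℓ t, z t - πz t⟫)
      + (∫ t in (0 : ℝ)..T, ⟪(∑ ℓ, b ℓ • G ℓ t) - f t, z t⟫)
      + (∑ ℓ, b ℓ * (Q ℓ - ∫ t in (0 : ℝ)..T, ⟪G ℓ t, πz t⟫))
      + (∫ t in (0 : ℝ)..T, ⟪f t - g₀ t, z t⟫) := by
  rw [← Set.uIcc_of_le hT.le] at hX' hf hg₀ hG hz hπz
  have hS : ContinuousOn (fun t => ∑ ℓ, b ℓ • G ℓ t) (Set.uIcc 0 T) :=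
    continuousOn_finsetSum _ fun ℓ _ => (hG ℓ).const_smul (b ℓ)
  rw [intervalIntegral.integral_inner_residual_split hX' hg₀ hf hS hz hπz, hGal,
    intervalIntegral.integral_inner_sum_smul_left _ _ fun ℓ _ => (hG ℓ).intervalIntegrable_inner hπz,
    ← Finset.sum_sub_distrib]
  simp only [mul_sub]

/-- Under the modified Galerkin orthogonality
`∫₀ᵀ ⟨Ẋ, πz⟩ = ∑_ℓ b_ℓ Q_ℓ`, the residual pairing with respect to the unregularized
operator decomposes exactly as
`∫₀ᵀ ⟨Ẋ − g₀, z⟩ = E_R + E_E + E_Q + E_Re` with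
`E_R = ∫₀ᵀ ⟨Ẋ − ∑_ℓ b_ℓ G_ℓ, z − πz⟩`,
`E_E = ∫₀ᵀ ⟨∑_ℓ b_ℓ G_ℓ − f, z⟩`,
`E_Q = ∑_ℓ b_ℓ (Q_ℓ − ∫₀ᵀ ⟨G_ℓ, πz⟩)`,
`E_Re = ∫₀ᵀ ⟨f − g₀, z⟩` (the regularization error). -/
theorem residual_error_decomposition_with_regularization
    (n L Qn : ℕ) (T : ℝ) (hT : 0 < T)
    (X X' f g₀ : ℝ → EuclideanSpace ℝ (Fin n))
    (G : Fin L → ℝ → EuclideanSpace ℝ (Fin n))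
    (b : Fin L → ℝ)
    (z πz : ℝ → EuclideanSpace ℝ (Fin n))
    (hX : ∀ t ∈ Set.Icc (0 : ℝ) T, HasDerivAt X (X' t) t)
    (hX' : ContinuousOn X' (Set.Icc 0 T))
    (hf : ContinuousOn f (Set.Icc 0 T))
    (hg₀ : ContinuousOn g₀ (Set.Icc 0 T))
    (hG : ∀ ℓ, ContinuousOn (G ℓ) (Set.Icc 0 T))
    (hz : ContinuousOn z (Set.Icc 0 T))
    (hπz : ContinuousOn πz (Set.Icc 0 T))
    -- quadrature weights and nodes
    (w : Fin L → Fin Qn → ℝ) (tq : Fin L → Fin Qn → ℝ)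
    (htq : ∀ ℓ q, tq ℓ q ∈ Set.Icc (0 : ℝ) T)
    (Q : Fin L → ℝ)
    (hQ : ∀ ℓ, Q ℓ = ∑ q, w ℓ q * ⟪G ℓ (tq ℓ q), πz (tq ℓ q)⟫)
    -- modified Galerkin orthogonality
    (hGal : (∫ t in (0 : ℝ)..T, ⟪X' t, πz t⟫) = ∑ ℓ, b ℓ * Q ℓ) :
    (∫ t in (0 : ℝ)..T, ⟪X' t - g₀ t, z t⟫) =
      (∫ t in (0 : ℝ)..T, ⟪X' t - ∑ ℓ, b ℓ • G ℓ t, z t - πz t⟫)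
      + (∫ t in (0 : ℝ)..T, ⟪(∑ ℓ, b ℓ • G ℓ t) - f t, z t⟫)
      + (∑ ℓ, b ℓ * (Q ℓ - ∫ t in (0 : ℝ)..T, ⟪G ℓ t, πz t⟫))
      + (∫ t in (0 : ℝ)..T, ⟪f t - g₀ t, z t⟫) :=
  residual_error_decomposition_with_regularization_general n L T hT X' f g₀ G b z πz hX' hf hg₀ hG
    hz hπz Q hGal
end

section
/- Let z : [0,T] → ℝⁿ be the differentiable solution of the adjoint equation ż(t) = −A(t)ᵀ z(t) with final data z(T) = e(T). Then ∫₀ᵀ ⟨F(t, X(t)) − Ẋ(t), z(t)⟩ dt = |e(T)|², the squared Euclidean norm of the final-time error. -/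
open scoped RealInnerProductSpace

/-!
The error `e = x - X` solves the linear equation `ė = A e + (F(t, X) - Ẋ)`, because by the
fundamental theorem of calculus along the segment from `X t` to `x t` the averaged Jacobian
satisfies `A(t) e(t) = F(t, x t) - F(t, X t)`. Against a solution of the adjoint equation
`ż = -Aᵀ z` the term `A e` cancels, so `d/dt ⟪e, z⟫ = ⟪F(t, X) - Ẋ, z⟫`. Integrating over
`[0, T]` and using `e(0) = 0`, `z(T) = e(T)` gives `|e(T)|²`.
-/

theorem ContDiff.integral_fderiv_segment_apply_sub
    {E G : Type*} [NormedAddCommGroup E] [NormedSpace ℝ E]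
    [NormedAddCommGroup G] [NormedSpace ℝ G] [CompleteSpace G]
    {f : E → G} (hf : ContDiff ℝ 1 f) (x y : E) :
    (∫ s in (0 : ℝ)..1, fderiv ℝ f (s • x + (1 - s) • y)) (x - y) = f x - f y := by
  have hpath : ∀ s : ℝ, s • x + (1 - s) • y = y + s • (x - y) := fun s => by
    rw [sub_smul, one_smul, smul_sub]; abel
  simp_rw [hpath]
  have hderiv : ∀ s : ℝ, HasDerivAt (fun s : ℝ => f (y + s • (x - y)))
      (fderiv ℝ f (y + s • (x - y)) (x - y)) s := fun s =>
    ((hf.differentiable one_ne_zero _).hasFDerivAt).comp_hasDerivAt s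
      (by simpa using ((hasDerivAt_id s).smul_const (x - y)).const_add y)
  have hcont : Continuous fun s : ℝ => fderiv ℝ f (y + s • (x - y)) :=
    (hf.continuous_fderiv one_ne_zero).comp (by fun_prop)
  rw [ContinuousLinearMap.intervalIntegral_apply (hcont.intervalIntegrable 0 1),
    intervalIntegral.integral_eq_sub_of_hasDerivAt (fun s _ => hderiv s)
      ((hcont.clm_apply continuous_const).intervalIntegrable 0 1)]
  simp

theorem HasDerivAt.inner_of_hasDerivAt_neg_adjoint
    {E : Type*} [NormedAddCommGroup E] [InnerProductSpace ℝ E] [CompleteSpace E]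
    {e z : ℝ → E} {e' : E} {A : E →L[ℝ] E} {t : ℝ}
    (he : HasDerivAt e e' t) (hz : HasDerivAt z (-(ContinuousLinearMap.adjoint A) (z t)) t) :
    HasDerivAt (fun t => ⟪e t, z t⟫) ⟪e' - A (e t), z t⟫ t := by
  refine (he.inner ℝ hz).congr_deriv ?_
  rw [inner_neg_right, ContinuousLinearMap.adjoint_inner_right, inner_sub_left]
  ring

theorem error_representation_formula_squared_norm_general
    (n : ℕ) (T : ℝ) (hT : 0 < T)
    (F : ℝ → EuclideanSpace ℝ (Fin n) → EuclideanSpace ℝ (Fin n))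
    (hFc : Continuous (fun p : ℝ × EuclideanSpace ℝ (Fin n) => F p.1 p.2))
    (hFd : ∀ t, ContDiff ℝ 1 (F t))
    (x X X' : ℝ → EuclideanSpace ℝ (Fin n))
    (hx : ∀ t ∈ Set.Icc (0 : ℝ) T, HasDerivAt x (F t (x t)) t)
    (hX : ∀ t ∈ Set.Icc (0 : ℝ) T, HasDerivAt X (X' t) t)
    (hX' : ContinuousOn X' (Set.Icc 0 T))
    (hX0 : X 0 = x 0)
    (A : ℝ → EuclideanSpace ℝ (Fin n) →L[ℝ] EuclideanSpace ℝ (Fin n))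
    (hA : ∀ t, A t = ∫ s in (0 : ℝ)..1, fderiv ℝ (F t) (s • x t + (1 - s) • X t))
    (z : ℝ → EuclideanSpace ℝ (Fin n))
    (hz : ∀ t ∈ Set.Icc (0 : ℝ) T,
      HasDerivAt z (-(ContinuousLinearMap.adjoint (A t)) (z t)) t)
    (hzT : z T = x T - X T) :
    (∫ t in (0 : ℝ)..T, ⟪F t (X t) - X' t, z t⟫) = ‖x T - X T‖ ^ 2 := by
  have hIcc : Set.uIcc (0 : ℝ) T = Set.Icc 0 T := Set.uIcc_of_le hT.le
  have hAe : ∀ t, A t (x t - X t) = F t (x t) - F t (X t) := fun t => by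
    rw [hA t, (hFd t).integral_fderiv_segment_apply_sub]
  have hderiv : ∀ t ∈ Set.uIcc (0 : ℝ) T,
      HasDerivAt (fun t => ⟪x t - X t, z t⟫) ⟪F t (X t) - X' t, z t⟫ t := by
    intro t ht
    rw [hIcc] at ht
    refine (((hx t ht).sub (hX t ht)).inner_of_hasDerivAt_neg_adjoint (hz t ht)).congr_deriv ?_
    rw [Pi.sub_apply, hAe, sub_sub_sub_cancel_left]
  have hXc : ContinuousOn X (Set.Icc 0 T) := fun t ht =>
    (hX t ht).continuousAt.continuousWithinAt
  have hzc : ContinuousOn z (Set.Icc 0 T) := fun t ht =>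
    (hz t ht).continuousAt.continuousWithinAt
  have hint : ContinuousOn (fun t => ⟪F t (X t) - X' t, z t⟫) (Set.uIcc 0 T) := by
    rw [hIcc]
    exact ((hFc.comp_continuousOn (continuousOn_id.prodMk hXc)).sub hX').inner hzc
  rw [intervalIntegral.integral_eq_sub_of_hasDerivAt hderiv hint.intervalIntegrable, hzT, hX0,
    sub_self, inner_zero_left, sub_zero, real_inner_self_eq_norm_sq]

/-- With `z` the differentiable solution of the adjoint equation
`ż(t) = −A(t)ᵀ z(t)` with final data `z(T) = e(T)`, where
`A(t) = ∫₀¹ D_xF(t, s·x(t) + (1−s)·X(t)) ds`, we have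
`∫₀ᵀ ⟨F(t, X(t)) − Ẋ(t), z(t)⟩ dt = |e(T)|²` with `e = x − X`. -/
theorem error_representation_formula_squared_norm
    (n : ℕ) (T : ℝ) (hT : 0 < T)
    (F : ℝ → EuclideanSpace ℝ (Fin n) → EuclideanSpace ℝ (Fin n))
    (hFc : Continuous (fun p : ℝ × EuclideanSpace ℝ (Fin n) => F p.1 p.2))
    (hFd : ∀ t, ContDiff ℝ 1 (F t))
    (hFd' : Continuous (fun p : ℝ × EuclideanSpace ℝ (Fin n) => fderiv ℝ (F p.1) p.2))
    (x X X' : ℝ → EuclideanSpace ℝ (Fin n))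
    (hx : ∀ t ∈ Set.Icc (0 : ℝ) T, HasDerivAt x (F t (x t)) t)
    (hX : ∀ t ∈ Set.Icc (0 : ℝ) T, HasDerivAt X (X' t) t)
    (hX' : ContinuousOn X' (Set.Icc 0 T))
    (hX0 : X 0 = x 0)
    (A : ℝ → EuclideanSpace ℝ (Fin n) →L[ℝ] EuclideanSpace ℝ (Fin n))
    (hA : ∀ t, A t = ∫ s in (0 : ℝ)..1, fderiv ℝ (F t) (s • x t + (1 - s) • X t))
    (z : ℝ → EuclideanSpace ℝ (Fin n))
    (hz : ∀ t ∈ Set.Icc (0 : ℝ) T,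
      HasDerivAt z (-(ContinuousLinearMap.adjoint (A t)) (z t)) t)
    (hzT : z T = x T - X T) :
    (∫ t in (0 : ℝ)..T, ⟪F t (X t) - X' t, z t⟫) = ‖x T - X T‖ ^ 2 :=
  error_representation_formula_squared_norm_general n T hT F hFc hFd x X X' hx hX hX' hX0 A hA z hz
    hzT
end

section
/- Let z : [0,T] → ℝⁿ be the differentiable solution of the adjoint equation ż(t) = −A(t)ᵀ z(t) with final data z(T) = e(T), and let πz : [0,T] → ℝⁿ be any integrable function satisfying the Galerkin orthogonality condition ∫₀ᵀ ⟨F(t, X(t)) − Ẋ(t), πz(t)⟩ dt = 0. Then ∫₀ᵀ ⟨F(t, X(t)) − Ẋ(t), z(t) − πz(t)⟩ dt = |e(T)|². -/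
open scoped RealInnerProductSpace

/-!
By the mean value theorem in integral form, `A(t) e(t) = F(t, x(t)) − F(t, X(t))`, so the error
satisfies `ė − A e = F(X) − Ẋ`, the residual. Pairing with the adjoint solution `z` makes
`⟨e, z⟩` an antiderivative of `⟨F(X) − Ẋ, z⟩`; since `e(0) = 0` and `z(T) = e(T)`, the integral
of the residual against `z` is `|e(T)|²`, and Galerkin orthogonality removes `πz`.
-/

theorem ContDiff.integral_fderiv_segment_apply
    {E G : Type*} [NormedAddCommGroup E] [NormedSpace ℝ E]
    [NormedAddCommGroup G] [NormedSpace ℝ G] [CompleteSpace G]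
    {f : E → G} (hf : ContDiff ℝ 1 f) (a b : E) :
    (∫ s in (0 : ℝ)..1, fderiv ℝ f (s • a + (1 - s) • b)) (a - b) = f a - f b := by
  set γ : ℝ → E := fun s => s • a + (1 - s) • b
  have hγ : ∀ s, HasDerivAt γ (a - b) s := fun s => by
    convert ((hasDerivAt_id s).smul_const a).add (((hasDerivAt_id s).const_sub 1).smul_const b)
      using 1
    · ext s; simp [γ]
    · simp [sub_eq_add_neg]
  have hcont : Continuous fun s => fderiv ℝ f (γ s) :=
    (hf.continuous_fderiv one_ne_zero).comp (by fun_prop)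
  rw [ContinuousLinearMap.intervalIntegral_apply (hcont.intervalIntegrable 0 1)]
  have key := intervalIntegral.integral_eq_sub_of_hasDerivAt (f := f ∘ γ)
    (fun s _ => ((hf.differentiable one_ne_zero (γ s)).hasFDerivAt).comp_hasDerivAt s (hγ s))
    ((hcont.clm_apply continuous_const).intervalIntegrable 0 1)
  simpa [γ] using key

section Adjoint

variable {E : Type*} [NormedAddCommGroup E] [InnerProductSpace ℝ E] [CompleteSpace E]

theorem HasDerivAt.inner_of_hasDerivAt_adjoint {e z : ℝ → E} {e' : E} {L : E →L[ℝ] E} {t : ℝ}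
    (he : HasDerivAt e e' t) (hz : HasDerivAt z (-(ContinuousLinearMap.adjoint L) (z t)) t) :
    HasDerivAt (fun s => ⟪e s, z s⟫) ⟪e' - L (e t), z t⟫ t := by
  refine (he.inner ℝ hz).congr_deriv ?_
  rw [inner_neg_right, ContinuousLinearMap.adjoint_inner_right, inner_sub_left]
  ring

theorem integral_inner_eq_sub_of_hasDerivAt_adjoint {a b : ℝ} (hab : a ≤ b)
    {e e' z : ℝ → E} {L : ℝ → E →L[ℝ] E}
    (he : ∀ t ∈ Set.Icc a b, HasDerivAt e (e' t) t)
    (hz : ∀ t ∈ Set.Icc a b, HasDerivAt z (-(ContinuousLinearMap.adjoint (L t)) (z t)) t)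
    (hint : IntervalIntegrable (fun t => ⟪e' t - L t (e t), z t⟫) MeasureTheory.volume a b) :
    ∫ t in a..b, ⟪e' t - L t (e t), z t⟫ = ⟪e b, z b⟫ - ⟪e a, z a⟫ := by
  refine intervalIntegral.integral_eq_sub_of_hasDerivAt (f := fun t => ⟪e t, z t⟫)
    (fun t ht => ?_) hint
  rw [Set.uIcc_of_le hab] at ht
  exact (he t ht).inner_of_hasDerivAt_adjoint (hz t ht)

end Adjoint

theorem error_representation_formula_galerkin_general
    (n : ℕ) (T : ℝ) (hT : 0 < T)
    (F : ℝ → EuclideanSpace ℝ (Fin n) → EuclideanSpace ℝ (Fin n))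
    (hFc : Continuous (fun p : ℝ × EuclideanSpace ℝ (Fin n) => F p.1 p.2))
    (hFd : ∀ t, ContDiff ℝ 1 (F t))
    (x X X' : ℝ → EuclideanSpace ℝ (Fin n))
    (hx : ∀ t ∈ Set.Icc (0 : ℝ) T, HasDerivAt x (F t (x t)) t)
    (hX : ∀ t ∈ Set.Icc (0 : ℝ) T, HasDerivAt X (X' t) t)
    (hX' : ContinuousOn X' (Set.Icc 0 T))
    (hX0 : X 0 = x 0)
    (A : ℝ → EuclideanSpace ℝ (Fin n) →L[ℝ] EuclideanSpace ℝ (Fin n))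
    (hA : ∀ t, A t = ∫ s in (0 : ℝ)..1, fderiv ℝ (F t) (s • x t + (1 - s) • X t))
    (z : ℝ → EuclideanSpace ℝ (Fin n))
    (hz : ∀ t ∈ Set.Icc (0 : ℝ) T,
      HasDerivAt z (-(ContinuousLinearMap.adjoint (A t)) (z t)) t)
    (hzT : z T = x T - X T)
    (πz : ℝ → EuclideanSpace ℝ (Fin n))
    (hπzInt : IntervalIntegrable (fun t => ⟪F t (X t) - X' t, πz t⟫)
      MeasureTheory.volume 0 T)
    (hGal : (∫ t in (0 : ℝ)..T, ⟪F t (X t) - X' t, πz t⟫) = 0) :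
    (∫ t in (0 : ℝ)..T, ⟪F t (X t) - X' t, z t - πz t⟫) = ‖x T - X T‖ ^ 2 := by
  have hAe : ∀ t, A t (x t - X t) = F t (x t) - F t (X t) := fun t => by
    rw [hA]
    exact (hFd t).integral_fderiv_segment_apply _ _
  have hresidual : ∀ t, F t (x t) - X' t - A t (x t - X t) = F t (X t) - X' t := fun t => by
    rw [hAe]; abel
  have hXc : ContinuousOn X (Set.Icc 0 T) := fun t ht =>
    (hX t ht).continuousAt.continuousWithinAt
  have hzc : ContinuousOn z (Set.Icc 0 T) := fun t ht =>
    (hz t ht).continuousAt.continuousWithinAt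
  have hint :
      IntervalIntegrable (fun t => ⟪F t (X t) - X' t, z t⟫) MeasureTheory.volume 0 T := by
    refine ContinuousOn.intervalIntegrable ?_
    rw [Set.uIcc_of_le hT.le]
    exact ((hFc.comp_continuousOn (continuousOn_id.prodMk hXc)).sub hX').inner hzc
  have hduality : ∫ t in (0 : ℝ)..T, ⟪F t (X t) - X' t, z t⟫ = ‖x T - X T‖ ^ 2 := by
    have h := integral_inner_eq_sub_of_hasDerivAt_adjoint (e := fun t => x t - X t) hT.le
      (fun t ht => (hx t ht).sub (hX t ht)) hz (by simpa only [hresidual] using hint)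
    simp only [hresidual] at h
    rw [h, hX0, sub_self, inner_zero_left, sub_zero, hzT, real_inner_self_eq_norm_sq]
  simp_rw [inner_sub_right]
  rw [intervalIntegral.integral_sub hint hπzInt, hduality, hGal, sub_zero]

/-- With `z` the differentiable solution of the adjoint equation
`ż(t) = −A(t)ᵀ z(t)`, `z(T) = e(T)`, and `πz` any integrable function satisfying the
Galerkin orthogonality `∫₀ᵀ ⟨F(t, X(t)) − Ẋ(t), πz(t)⟩ dt = 0`, we have
`∫₀ᵀ ⟨F(t, X(t)) − Ẋ(t), z(t) − πz(t)⟩ dt = |e(T)|²` with `e = x − X`. -/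
theorem error_representation_formula_galerkin
    (n : ℕ) (T : ℝ) (hT : 0 < T)
    (F : ℝ → EuclideanSpace ℝ (Fin n) → EuclideanSpace ℝ (Fin n))
    (hFc : Continuous (fun p : ℝ × EuclideanSpace ℝ (Fin n) => F p.1 p.2))
    (hFd : ∀ t, ContDiff ℝ 1 (F t))
    (hFd' : Continuous (fun p : ℝ × EuclideanSpace ℝ (Fin n) => fderiv ℝ (F p.1) p.2))
    (x X X' : ℝ → EuclideanSpace ℝ (Fin n))
    (hx : ∀ t ∈ Set.Icc (0 : ℝ) T, HasDerivAt x (F t (x t)) t)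
    (hX : ∀ t ∈ Set.Icc (0 : ℝ) T, HasDerivAt X (X' t) t)
    (hX' : ContinuousOn X' (Set.Icc 0 T))
    (hX0 : X 0 = x 0)
    (A : ℝ → EuclideanSpace ℝ (Fin n) →L[ℝ] EuclideanSpace ℝ (Fin n))
    (hA : ∀ t, A t = ∫ s in (0 : ℝ)..1, fderiv ℝ (F t) (s • x t + (1 - s) • X t))
    (z : ℝ → EuclideanSpace ℝ (Fin n))
    (hz : ∀ t ∈ Set.Icc (0 : ℝ) T,
      HasDerivAt z (-(ContinuousLinearMap.adjoint (A t)) (z t)) t)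
    (hzT : z T = x T - X T)
    (πz : ℝ → EuclideanSpace ℝ (Fin n))
    (hπzInt : IntervalIntegrable (fun t => ⟪F t (X t) - X' t, πz t⟫)
      MeasureTheory.volume 0 T)
    (hGal : (∫ t in (0 : ℝ)..T, ⟪F t (X t) - X' t, πz t⟫) = 0) :
    (∫ t in (0 : ℝ)..T, ⟪F t (X t) - X' t, z t - πz t⟫) = ‖x T - X T‖ ^ 2 :=
  error_representation_formula_galerkin_general n T hT F hFc hFd x X X' hx hX hX' hX0 A hA z hz hzT
    πz hπzInt hGal
end
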